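/- Let (x*, λ*, μ*) be a saddle point of the Lagrangian L, assume each g_{ji} is Lipschitz continuous on X_i with modulus L_{ji}, and let 0 < ε < 1 and 0 < ρ ≤ min{(1−ε)/(A_max + M·L_max), (1−ε)/(N·A_max), (1−ε)/(N·L_max)}. Let (x^k, λ^k, μ^k)_{k≥0} be generated by the N-block PCPM iteration with step size ρ from an arbitrary starting point, with auxiliary variables γ^{k+1}, ν^{k+1}. Then as k → ∞: Σ_i ‖x_i^{k+1} − x_i^k‖₂² → 0, ‖γ^{k+1} − λ^{k+1}‖₂ → 0, ‖ν^{k+1} − μ^{k+1}‖₂ → 0, ‖γ^{k+1} − λ^k‖₂ → 0, and ‖ν^{k+1} − μ^k‖₂ → 0. -/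

import Mathlib

open scoped BigOperators

/-- The Lagrangian `L(x, λ, μ) = Σᵢ fᵢ(xᵢ) + λᵀ(Σᵢ Aᵢ xᵢ − b) + Σⱼ μⱼ Σᵢ g_{ji}(xᵢ)`. -/
noncomputable def lagrangian {N M m : ℕ} {n : Fin N → ℕ}
    (f : ∀ i, EuclideanSpace ℝ (Fin (n i)) → ℝ)
    (A : ∀ i, EuclideanSpace ℝ (Fin (n i)) →L[ℝ] EuclideanSpace ℝ (Fin m))
    (b : EuclideanSpace ℝ (Fin m))
    (g : Fin M → ∀ i, EuclideanSpace ℝ (Fin (n i)) → ℝ)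
    (x : ∀ i, EuclideanSpace ℝ (Fin (n i)))
    (lam : EuclideanSpace ℝ (Fin m)) (mu : EuclideanSpace ℝ (Fin M)) : ℝ :=
  (∑ i, f i (x i)) + (inner ℝ lam ((∑ i, A i (x i)) - b) : ℝ)
    + ∑ j, mu j * ∑ i, g j i (x i)

/-- `(x*, λ*, μ*)` is a saddle point of the Lagrangian:
`x*ᵢ ∈ Xᵢ`, `μ* ≥ 0`, and `L(x*, λ, μ) ≤ L(x*, λ*, μ*) ≤ L(x, λ*, μ*)` for all feasible
`x`, all `λ ∈ ℝ^m` and all `μ ∈ ℝ^M_{≥0}`. -/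
noncomputable def IsSaddlePoint {N M m : ℕ} {n : Fin N → ℕ}
    (f : ∀ i, EuclideanSpace ℝ (Fin (n i)) → ℝ)
    (A : ∀ i, EuclideanSpace ℝ (Fin (n i)) →L[ℝ] EuclideanSpace ℝ (Fin m))
    (b : EuclideanSpace ℝ (Fin m))
    (g : Fin M → ∀ i, EuclideanSpace ℝ (Fin (n i)) → ℝ)
    (X : ∀ i, Set (EuclideanSpace ℝ (Fin (n i))))
    (xs : ∀ i, EuclideanSpace ℝ (Fin (n i)))
    (ls : EuclideanSpace ℝ (Fin m)) (ms : EuclideanSpace ℝ (Fin M)) : Prop :=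
  (∀ i, xs i ∈ X i) ∧ (∀ j, 0 ≤ ms j) ∧
  (∀ (lam : EuclideanSpace ℝ (Fin m)) (mu : EuclideanSpace ℝ (Fin M)), (∀ j, 0 ≤ mu j) →
    lagrangian f A b g xs lam mu ≤ lagrangian f A b g xs ls ms) ∧
  (∀ x : ∀ i, EuclideanSpace ℝ (Fin (n i)), (∀ i, x i ∈ X i) →
    lagrangian f A b g xs ls ms ≤ lagrangian f A b g x ls ms)

/-!
With `V k = ∑ i, ‖x* i - x k i‖² + ‖λ k - λ*‖² + ‖μ k - μ*‖²`, one PCPM step satisfies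

  `V (k+1) + ∑ i, ‖x (k+1) i - x k i‖² + ‖γ (k+1) - λ k‖² + ‖ν (k+1) - μ k‖²`
  `  ≤ V k + ‖γ (k+1) - λ (k+1)‖² + ρ² ∑ j, (G j (x k) - G j (x (k+1)))²`,

where `G j y = ∑ i, g j i (y i)`. It comes from the three-point inequality of each strongly convex
proximal block step, the saddle inequality `L(x*, λ*, μ*) ≤ L(x (k+1), λ*, μ*)`, and the
(for `μ`, projected) corrector updates. The predictor–corrector gap on the right is bounded by
`(1 - ε)² ∑ i, ‖x (k+1) i - x k i‖²` via `‖A i‖ ≤ Amax`, the Lipschitz moduli and the step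
size condition. Hence `V` decreases, the dissipated terms are summable and tend to zero, and the
gap bound carries this over to `γ (k+1) - λ (k+1)` and `ν (k+1) - μ (k+1)`.
-/

open Filter Topology
open scoped RealInnerProductSpace

theorem ConvexOn.finset_sum {𝕜 E β ι : Type*} [Semiring 𝕜] [PartialOrder 𝕜] [AddCommMonoid E]
    [AddCommMonoid β] [PartialOrder β] [IsOrderedAddMonoid β] [SMul 𝕜 E] [Module 𝕜 β]
    {s : Set E} (hs : Convex 𝕜 s) {t : Finset ι} {f : ι → E → β}
    (hf : ∀ i ∈ t, ConvexOn 𝕜 s (f i)) :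
    ConvexOn 𝕜 s (fun x => ∑ i ∈ t, f i x) := by
  classical
  induction t using Finset.induction_on with
  | empty => simpa using convexOn_const (0 : β) hs
  | insert i t hi ih =>
    simp_rw [Finset.sum_insert hi]
    exact (hf i (t.mem_insert_self i)).add (ih fun j hj => hf j (Finset.mem_insert_of_mem hj))

theorem ConvexOn.prox_three_point {E : Type*} [NormedAddCommGroup E] [InnerProductSpace ℝ E]
    {φ : E → ℝ} {X : Set E} (hφ : ConvexOn ℝ X φ) {c : ℝ}
    {x₀ x₁ y : E} (hx₁ : x₁ ∈ X) (hy : y ∈ X)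
    (hmin : ∀ z ∈ X, φ x₁ + c * ‖x₁ - x₀‖ ^ 2 ≤ φ z + c * ‖z - x₀‖ ^ 2) :
    φ x₁ + c * ‖x₁ - x₀‖ ^ 2 + c * ‖y - x₁‖ ^ 2 ≤ φ y + c * ‖y - x₀‖ ^ 2 := by
  have hnorm : ∀ t : ℝ, ‖x₁ + t • (y - x₁) - x₀‖ ^ 2
      = ‖x₁ - x₀‖ ^ 2 + 2 * t * ⟪x₁ - x₀, y - x₁⟫ + t ^ 2 * ‖y - x₁‖ ^ 2 := by
    intro t
    rw [add_sub_right_comm, norm_add_sq_real, real_inner_smul_right, norm_smul, mul_pow,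
      Real.norm_eq_abs, sq_abs]
    ring
  -- compare with the competitor `x₁ + t • (y - x₁)` and divide by `t`
  have hseg : ∀ t ∈ Set.Ioo (0 : ℝ) 1,
      0 ≤ φ y - φ x₁ + 2 * c * ⟪x₁ - x₀, y - x₁⟫ + c * t * ‖y - x₁‖ ^ 2 := by
    rintro t ⟨ht0, ht1⟩
    have hconv : φ (x₁ + t • (y - x₁)) ≤ (1 - t) * φ x₁ + t * φ y := by
      have hpt : x₁ + t • (y - x₁) = (1 - t) • x₁ + t • y := by
        rw [sub_smul, one_smul, smul_sub]; abel
      simpa only [hpt, smul_eq_mul] using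
        hφ.2 hx₁ hy (sub_nonneg.2 ht1.le) ht0.le (sub_add_cancel 1 t)
    have hz := hmin _ (hφ.1.add_smul_sub_mem hx₁ hy ⟨ht0.le, ht1.le⟩)
    rw [hnorm] at hz
    refine nonneg_of_mul_nonneg_right ?_ ht0
    nlinarith
  have hlim : 0 ≤ φ y - φ x₁ + 2 * c * ⟪x₁ - x₀, y - x₁⟫ := by
    have hcont : Continuous fun t : ℝ =>
        φ y - φ x₁ + 2 * c * ⟪x₁ - x₀, y - x₁⟫ + c * t * ‖y - x₁‖ ^ 2 := by fun_prop
    refine ge_of_tendsto ?_ (eventually_of_mem (Ioo_mem_nhdsGT one_pos) hseg)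
    simpa using (hcont.tendsto 0).mono_left (nhdsWithin_le_nhds (s := Set.Ioi 0))
  have hy₀ := hnorm 1
  rw [one_smul, add_sub_cancel] at hy₀
  rw [hy₀]
  linarith

theorem two_mul_inner_eq_of_eq_add_smul {F : Type*} [NormedAddCommGroup F]
    [InnerProductSpace ℝ F] {lam lam' γ ls r : F} {ρ : ℝ} (h : lam' = lam + ρ • r) :
    2 * ρ * ⟪γ - ls, r⟫ = ‖lam' - ls‖ ^ 2 - ‖lam - ls‖ ^ 2 + ‖γ - lam‖ ^ 2 - ‖γ - lam'‖ ^ 2 := by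
  have hpolar : 2 * ⟪γ - ls, lam' - lam⟫
      = ‖lam' - ls‖ ^ 2 - ‖lam - ls‖ ^ 2 + ‖γ - lam‖ ^ 2 - ‖γ - lam'‖ ^ 2 := by
    simp only [norm_sub_sq_real, inner_sub_left, inner_sub_right, real_inner_comm ls]
    ring
  rw [h, add_sub_cancel_left, real_inner_smul_right] at hpolar
  rw [h]
  linarith

theorem EuclideanSpace.norm_sub_sq_eq_sum {ι : Type*} [Fintype ι] (u v : EuclideanSpace ℝ ι) :
    ‖u - v‖ ^ 2 = ∑ j, (u j - v j) ^ 2 := by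
  simp [EuclideanSpace.norm_sq_eq, Real.norm_eq_abs, sq_abs]

/-- Projected counterpart of `two_mul_inner_eq_of_eq_add_smul` for one inequality multiplier;
the term `ρ ^ 2 * (s - s') ^ 2` is the price of evaluating the predictor at the old iterate. -/
theorem sq_max_zero_corrector_le {ρ s s' ss μ μs : ℝ} (hρ : 0 ≤ ρ) (hμs : 0 ≤ μs)
    (hss : ss ≤ 0) (hcs : μs * ss = 0) :
    (max 0 (μ + ρ * s') - μs) ^ 2 - (μ - μs) ^ 2 + (max 0 (μ + ρ * s) - μ) ^ 2
        - ρ ^ 2 * (s - s') ^ 2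
      ≤ 2 * ρ * ((max 0 (μ + ρ * s) - μs) * (s' - ss)) := by
  have hρss : ρ * ss ≤ 0 := mul_nonpos_of_nonneg_of_nonpos hρ hss
  rcases le_total (μ + ρ * s) 0 with h1 | h1 <;> rcases le_total (μ + ρ * s') 0 with h2 | h2
  · simp only [max_eq_left, h1, h2]
    nlinarith [mul_nonneg hμs (neg_nonneg.2 h2), sq_nonneg (ρ * s - ρ * s')]
  · simp only [max_eq_left, max_eq_right, h1, h2]
    nlinarith [mul_nonneg h2 (neg_nonneg.2 h1), sq_nonneg (μ + ρ * s)]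
  · simp only [max_eq_left, max_eq_right, h1, h2]
    nlinarith [mul_nonneg hμs (neg_nonneg.2 h2), mul_nonneg h1 (neg_nonneg.2 hρss),
      sq_nonneg (μ + ρ * s')]
  · simp only [max_eq_right, h1, h2]
    nlinarith [mul_nonneg h1 (neg_nonneg.2 hρss)]

section MaxZero

variable {ι : Type*} [Fintype ι] {ρ : ℝ} {mu mu' ν : EuclideanSpace ℝ ι} {s s' : ι → ℝ}

theorem norm_sq_max_zero_corrector_le {ms : EuclideanSpace ℝ ι} {ss : ι → ℝ} (hρ : 0 ≤ ρ)
    (hms : ∀ j, 0 ≤ ms j) (hss : ∀ j, ss j ≤ 0) (hcs : ∀ j, ms j * ss j = 0)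
    (hν : ∀ j, ν j = max 0 (mu j + ρ * s j)) (hmu' : ∀ j, mu' j = max 0 (mu j + ρ * s' j)) :
    ‖mu' - ms‖ ^ 2 - ‖mu - ms‖ ^ 2 + ‖ν - mu‖ ^ 2 - ρ ^ 2 * ∑ j, (s j - s' j) ^ 2
      ≤ 2 * ρ * ∑ j, (ν j - ms j) * (s' j - ss j) := by
  have h := Finset.sum_le_sum fun j (_ : j ∈ Finset.univ) =>
    sq_max_zero_corrector_le (μ := mu j) (s := s j) (s' := s' j) hρ (hms j) (hss j) (hcs j)
  simp only [EuclideanSpace.norm_sub_sq_eq_sum, hν, hmu', Finset.mul_sum,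
    ← Finset.sum_sub_distrib, ← Finset.sum_add_distrib]
  exact h

theorem norm_sq_max_zero_sub_le (hν : ∀ j, ν j = max 0 (mu j + ρ * s j))
    (hmu' : ∀ j, mu' j = max 0 (mu j + ρ * s' j)) :
    ‖ν - mu'‖ ^ 2 ≤ ρ ^ 2 * ∑ j, (s j - s' j) ^ 2 := by
  rw [EuclideanSpace.norm_sub_sq_eq_sum, Finset.mul_sum]
  refine Finset.sum_le_sum fun j _ => ?_
  rw [hν, hmu', max_comm 0, max_comm 0, ← sq_abs]
  calc |max (mu j + ρ * s j) 0 - max (mu j + ρ * s' j) 0| ^ 2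
      ≤ |(mu j + ρ * s j) - (mu j + ρ * s' j)| ^ 2 :=
        pow_le_pow_left₀ (abs_nonneg _) (abs_max_sub_max_le_abs _ _ _) 2
    _ = ρ ^ 2 * (s j - s' j) ^ 2 := by rw [sq_abs]; ring

end MaxZero

section Bounds

variable {ι : Type*} [Fintype ι]

theorem sq_le_card_mul_sum_sq_of_le_mul_sum {a K : ℝ} {t : ι → ℝ} (ha : 0 ≤ a)
    (h : a ≤ K * ∑ i, t i) : a ^ 2 ≤ K ^ 2 * Fintype.card ι * ∑ i, t i ^ 2 := by
  have hcs : (∑ i, t i) ^ 2 ≤ Fintype.card ι * ∑ i, t i ^ 2 := by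
    simpa using sq_sum_le_card_mul_sum_sq (s := Finset.univ) (f := t)
  calc a ^ 2 ≤ (K * ∑ i, t i) ^ 2 := pow_le_pow_left₀ ha h 2
    _ = K ^ 2 * (∑ i, t i) ^ 2 := mul_pow _ _ _
    _ ≤ K ^ 2 * (Fintype.card ι * ∑ i, t i ^ 2) := mul_le_mul_of_nonneg_left hcs (sq_nonneg K)
    _ = K ^ 2 * Fintype.card ι * ∑ i, t i ^ 2 := by ring

variable {E : ι → Type*} [∀ i, SeminormedAddCommGroup (E i)]

theorem norm_sum_apply_sub_sum_apply_le [∀ i, NormedSpace ℝ (E i)] {F : Type*}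
    [SeminormedAddCommGroup F] [NormedSpace ℝ F] {A : ∀ i, E i →L[ℝ] F} {K : ℝ}
    (hA : ∀ i, ‖A i‖ ≤ K) (x x' : ∀ i, E i) :
    ‖∑ i, A i (x i) - ∑ i, A i (x' i)‖ ≤ K * ∑ i, ‖x' i - x i‖ := by
  rw [← Finset.sum_sub_distrib, Finset.mul_sum]
  refine (norm_sum_le _ _).trans (Finset.sum_le_sum fun i _ => ?_)
  rw [← map_sub, norm_sub_rev (x' i)]
  exact (A i).le_of_opNorm_le (hA i) _

theorem abs_sum_sub_sum_le_of_lipschitzOn {g : ∀ i, E i → ℝ} {X : ∀ i, Set (E i)}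
    {Lc : ι → ℝ} {K : ℝ} (hLip : ∀ i, ∀ y ∈ X i, ∀ z ∈ X i, |g i y - g i z| ≤ Lc i * ‖y - z‖)
    (hK : ∀ i, Lc i ≤ K) {x x' : ∀ i, E i} (hx : ∀ i, x i ∈ X i) (hx' : ∀ i, x' i ∈ X i) :
    |∑ i, g i (x i) - ∑ i, g i (x' i)| ≤ K * ∑ i, ‖x' i - x i‖ := by
  rw [← Finset.sum_sub_distrib, Finset.mul_sum]
  refine (Finset.abs_sum_le_sum_abs _ _).trans (Finset.sum_le_sum fun i _ => ?_)
  rw [norm_sub_rev (x' i)]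
  exact (hLip i _ (hx i) _ (hx' i)).trans (mul_le_mul_of_nonneg_right (hK i) (norm_nonneg _))

end Bounds

theorem pos_and_mul_le_of_le_div {ρ c d : ℝ} (hρ : 0 < ρ) (hc : 0 ≤ c) (h : ρ ≤ c / d) :
    0 < d ∧ ρ * d ≤ c := by
  have hd : 0 < d := by
    by_contra! hd
    linarith [div_nonpos_of_nonneg_of_nonpos hc hd]
  exact ⟨hd, (le_div_iff₀ hd).1 h⟩

theorem step_size_sq_le {ρ ε A L : ℝ} {N M : ℕ} (hρ : 0 < ρ) (hε : ε < 1)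
    (h₁ : ρ ≤ (1 - ε) / (A + M * L)) (h₂ : ρ ≤ (1 - ε) / (N * A))
    (h₃ : ρ ≤ (1 - ε) / (N * L)) :
    ρ ^ 2 * (A ^ 2 * N + M * (L ^ 2 * N)) ≤ (1 - ε) ^ 2 := by
  have hε' : 0 ≤ 1 - ε := by linarith
  obtain ⟨hNA, hρNA⟩ := pos_and_mul_le_of_le_div hρ hε' h₂
  obtain ⟨hNL, hρNL⟩ := pos_and_mul_le_of_le_div hρ hε' h₃
  have hA : 0 < A := pos_of_mul_pos_right hNA (Nat.cast_nonneg N)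
  have hL : 0 < L := pos_of_mul_pos_right hNL (Nat.cast_nonneg N)
  obtain ⟨-, hρAML⟩ := pos_and_mul_le_of_le_div hρ hε' h₁
  have hρA : 0 ≤ ρ * A := by positivity
  have hρML : 0 ≤ ρ * M * L := by positivity
  nlinarith [mul_le_mul_of_nonneg_left hρNA hρA, mul_le_mul_of_nonneg_left hρNL hρML,
    mul_le_mul_of_nonneg_left hρAML hε']

theorem summable_of_add_le_of_nonneg {V d : ℕ → ℝ} (hV : ∀ k, 0 ≤ V k) (hd : ∀ k, 0 ≤ d k)
    (h : ∀ k, V (k + 1) + d k ≤ V k) : Summable d := by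
  refine summable_of_sum_range_le hd (c := V 0) fun K => ?_
  have htel : ∑ k ∈ Finset.range K, d k ≤ ∑ k ∈ Finset.range K, (V k - V (k + 1)) :=
    Finset.sum_le_sum fun k _ => by linarith [h k]
  rw [Finset.sum_range_sub'] at htel
  linarith [hV K]

theorem tendsto_norm_zero_of_sq_le {α F : Type*} [SeminormedAddCommGroup F] {l : Filter α}
    {u : α → F} {a : α → ℝ} {C : ℝ} (ha : Tendsto a l (𝓝 0)) (h : ∀ k, ‖u k‖ ^ 2 ≤ C * a k) :
    Tendsto (fun k => ‖u k‖) l (𝓝 0) := by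
  have hsq : Tendsto (fun k => ‖u k‖ ^ 2) l (𝓝 0) :=
    squeeze_zero (fun k => sq_nonneg _) h (by simpa using ha.const_mul C)
  simpa [Real.sqrt_sq (norm_nonneg _)] using hsq.sqrt

theorem tendsto_zero_of_descent {V a b c : ℕ → ℝ} {δ : ℝ} (hδ : 0 < δ) (hV : ∀ k, 0 ≤ V k)
    (ha : ∀ k, 0 ≤ a k) (hb : ∀ k, 0 ≤ b k) (hc : ∀ k, 0 ≤ c k)
    (h : ∀ k, V (k + 1) + (δ * a k + b k + c k) ≤ V k) :
    Tendsto a atTop (𝓝 0) ∧ Tendsto b atTop (𝓝 0) ∧ Tendsto c atTop (𝓝 0) := by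
  have hd := (summable_of_add_le_of_nonneg hV
    (fun k => add_nonneg (add_nonneg (mul_nonneg hδ.le (ha k)) (hb k)) (hc k)) h).tendsto_atTop_zero
  refine ⟨squeeze_zero ha (fun k => ?_) (by simpa using hd.const_mul δ⁻¹),
    squeeze_zero hb (fun k => ?_) hd, squeeze_zero hc (fun k => ?_) hd⟩
  · rw [le_inv_mul_iff₀ hδ]
    linarith [hb k, hc k]
  · nlinarith [ha k, hc k]
  · nlinarith [ha k, hb k]

section PCPM

variable {N M m : ℕ} {n : Fin N → ℕ}
  {f : ∀ i, EuclideanSpace ℝ (Fin (n i)) → ℝ}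
  {A : ∀ i, EuclideanSpace ℝ (Fin (n i)) →L[ℝ] EuclideanSpace ℝ (Fin m)}
  {b : EuclideanSpace ℝ (Fin m)}
  {g : Fin M → ∀ i, EuclideanSpace ℝ (Fin (n i)) → ℝ}
  {X : ∀ i, Set (EuclideanSpace ℝ (Fin (n i)))}
  {xs : ∀ i, EuclideanSpace ℝ (Fin (n i))}
  {ls : EuclideanSpace ℝ (Fin m)} {ms : EuclideanSpace ℝ (Fin M)}

theorem lagrangian_sub_lagrangian (x : ∀ i, EuclideanSpace ℝ (Fin (n i)))
    (lam lam' : EuclideanSpace ℝ (Fin m)) (mu mu' : EuclideanSpace ℝ (Fin M)) :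
    lagrangian f A b g x lam mu - lagrangian f A b g x lam' mu'
      = ⟪lam - lam', (∑ i, A i (x i)) - b⟫ + ∑ j, (mu j - mu' j) * ∑ i, g j i (x i) := by
  simp only [lagrangian, inner_sub_left, sub_mul, Finset.sum_sub_distrib]
  ring

theorem sum_block_eq_lagrangian (x : ∀ i, EuclideanSpace ℝ (Fin (n i)))
    (lam : EuclideanSpace ℝ (Fin m)) (mu : EuclideanSpace ℝ (Fin M)) :
    ∑ i, (f i (x i) + ⟪lam, A i (x i)⟫ + ∑ j, mu j * g j i (x i))
      = lagrangian f A b g x lam mu + ⟪lam, b⟫ := by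
  simp only [lagrangian, Finset.sum_add_distrib, inner_sub_right, ← inner_sum, Finset.mul_sum]
  rw [Finset.sum_comm (f := fun i j => mu j * g j i (x i))]
  ring

namespace IsSaddlePoint

theorem sum_apply_eq (h : IsSaddlePoint f A b g X xs ls ms) : ∑ i, A i (xs i) = b := by
  have hL := h.2.2.1 (ls + ((∑ i, A i (xs i)) - b)) ms h.2.1
  simp only [lagrangian, inner_add_left] at hL
  exact sub_eq_zero.1 (real_inner_self_nonpos.1 (by linarith))

theorem sum_nonpos (h : IsSaddlePoint f A b g X xs ls ms) (j : Fin M) :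
    ∑ i, g j i (xs i) ≤ 0 := by
  have hL := h.2.2.1 ls (ms + EuclideanSpace.single j 1)
    (fun j' => add_nonneg (h.2.1 j') (by by_cases hj : j' = j <;> simp [hj]))
  simp only [lagrangian, PiLp.add_apply, PiLp.single_apply, add_mul,
    Finset.sum_add_distrib, ite_mul, one_mul, zero_mul, Finset.sum_ite_eq', Finset.mem_univ,
    if_true] at hL
  linarith

theorem mul_sum_eq_zero (h : IsSaddlePoint f A b g X xs ls ms) (j : Fin M) :
    ms j * ∑ i, g j i (xs i) = 0 := by
  have hL := h.2.2.1 ls 0 fun _ => le_rfl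
  simp only [lagrangian, PiLp.zero_apply, zero_mul, Finset.sum_const_zero] at hL
  have hle : ∀ j ∈ Finset.univ, ms j * ∑ i, g j i (xs i) ≤ 0 :=
    fun j _ => mul_nonpos_of_nonneg_of_nonpos (h.2.1 j) (h.sum_nonpos j)
  exact (Finset.sum_eq_zero_iff_of_nonpos hle).1
    (le_antisymm (Finset.sum_nonpos hle) (by linarith)) j (Finset.mem_univ j)

end IsSaddlePoint

theorem lagrangian_add_prox_le (hX : ∀ i, Convex ℝ (X i))
    (hf : ∀ i, ConvexOn ℝ Set.univ (f i)) (hg : ∀ j i, ConvexOn ℝ Set.univ (g j i))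
    {γ : EuclideanSpace ℝ (Fin m)} {ν : EuclideanSpace ℝ (Fin M)} (hν : ∀ j, 0 ≤ ν j) {c : ℝ}
    {x x' y : ∀ i, EuclideanSpace ℝ (Fin (n i))} (hx' : ∀ i, x' i ∈ X i) (hy : ∀ i, y i ∈ X i)
    (hmin : ∀ i, ∀ z ∈ X i,
      f i (x' i) + ⟪γ, A i (x' i)⟫ + (∑ j, ν j * g j i (x' i)) + c * ‖x' i - x i‖ ^ 2
        ≤ f i z + ⟪γ, A i z⟫ + (∑ j, ν j * g j i z) + c * ‖z - x i‖ ^ 2) :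
    lagrangian f A b g x' γ ν + c * (∑ i, ‖x' i - x i‖ ^ 2) + c * (∑ i, ‖y i - x' i‖ ^ 2)
      ≤ lagrangian f A b g y γ ν + c * (∑ i, ‖y i - x i‖ ^ 2) := by
  have hconv : ∀ i, ConvexOn ℝ (X i) fun z => f i z + ⟪γ, A i z⟫ + ∑ j, ν j * g j i z :=
    fun i => (((hf i).subset (Set.subset_univ _) (hX i)).add
      ((((innerSL ℝ γ).comp (A i)).toLinearMap).convexOn (hX i))).add
      (ConvexOn.finset_sum (hX i) fun j _ =>
        ((hg j i).subset (Set.subset_univ _) (hX i)).smul (hν j))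
  have hblock := Finset.sum_le_sum fun i (_ : i ∈ Finset.univ) =>
    (hconv i).prox_three_point (hx' i) (hy i) (hmin i)
  have hx'L := sum_block_eq_lagrangian (f := f) (A := A) (b := b) (g := g) x' γ ν
  have hyL := sum_block_eq_lagrangian (f := f) (A := A) (b := b) (g := g) y γ ν
  simp only [Finset.sum_add_distrib, ← Finset.mul_sum] at hblock hx'L hyL
  linarith

theorem pcpm_step_descent (hX : ∀ i, Convex ℝ (X i))
    (hf : ∀ i, ConvexOn ℝ Set.univ (f i)) (hg : ∀ j i, ConvexOn ℝ Set.univ (g j i))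
    (hsaddle : IsSaddlePoint f A b g X xs ls ms) {ρ : ℝ} (hρ : 0 < ρ)
    {x x' : ∀ i, EuclideanSpace ℝ (Fin (n i))} {lam lam' γ : EuclideanSpace ℝ (Fin m)}
    {mu mu' ν : EuclideanSpace ℝ (Fin M)}
    (hν : ∀ j, ν j = max 0 (mu j + ρ * ∑ i, g j i (x i))) (hx' : ∀ i, x' i ∈ X i)
    (hmin : ∀ i, ∀ y ∈ X i,
      f i (x' i) + ⟪γ, A i (x' i)⟫ + (∑ j, ν j * g j i (x' i)) + 1 / (2 * ρ) * ‖x' i - x i‖ ^ 2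
        ≤ f i y + ⟪γ, A i y⟫ + (∑ j, ν j * g j i y) + 1 / (2 * ρ) * ‖y - x i‖ ^ 2)
    (hlam : lam' = lam + ρ • ((∑ i, A i (x' i)) - b))
    (hmu : ∀ j, mu' j = max 0 (mu j + ρ * ∑ i, g j i (x' i))) :
    (∑ i, ‖xs i - x' i‖ ^ 2) + ‖lam' - ls‖ ^ 2 + ‖mu' - ms‖ ^ 2
        + ((∑ i, ‖x' i - x i‖ ^ 2) + ‖γ - lam‖ ^ 2 + ‖ν - mu‖ ^ 2)
      ≤ (∑ i, ‖xs i - x i‖ ^ 2) + ‖lam - ls‖ ^ 2 + ‖mu - ms‖ ^ 2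
        + (‖γ - lam'‖ ^ 2 + ρ ^ 2 * ∑ j, (∑ i, g j i (x i) - ∑ i, g j i (x' i)) ^ 2) := by
  have hν0 : ∀ j, 0 ≤ ν j := fun j => (hν j).symm ▸ le_max_left _ _
  have hprimal := lagrangian_add_prox_le (b := b) hX hf hg hν0 hx' hsaddle.1 hmin
  have hsaddle_x' := hsaddle.2.2.2 x' hx'
  have hLx' := lagrangian_sub_lagrangian (f := f) (A := A) (b := b) (g := g) x' γ ls ν ms
  have hLxs := lagrangian_sub_lagrangian (f := f) (A := A) (b := b) (g := g) xs γ ls ν ms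
  rw [hsaddle.sum_apply_eq, sub_self, inner_zero_right, zero_add] at hLxs
  have hsplit : ∑ j, (ν j - ms j) * (∑ i, g j i (x' i) - ∑ i, g j i (xs i))
      = ∑ j, (ν j - ms j) * ∑ i, g j i (x' i) - ∑ j, (ν j - ms j) * ∑ i, g j i (xs i) := by
    simp only [mul_sub, Finset.sum_sub_distrib]
  have hprimal_dual : ⟪γ - ls, (∑ i, A i (x' i)) - b⟫
        + ∑ j, (ν j - ms j) * (∑ i, g j i (x' i) - ∑ i, g j i (xs i))
      ≤ 1 / (2 * ρ) * ((∑ i, ‖xs i - x i‖ ^ 2) - (∑ i, ‖xs i - x' i‖ ^ 2)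
        - ∑ i, ‖x' i - x i‖ ^ 2) := by
    rw [hsplit]
    linarith
  have hprimal_dual' := mul_le_mul_of_nonneg_left hprimal_dual (by positivity : (0 : ℝ) ≤ 2 * ρ)
  rw [← mul_assoc, mul_one_div_cancel (by positivity), one_mul] at hprimal_dual'
  have hlamId := two_mul_inner_eq_of_eq_add_smul (γ := γ) (ls := ls) hlam
  have hmuIneq := norm_sq_max_zero_corrector_le hρ.le hsaddle.2.1 hsaddle.sum_nonpos
    hsaddle.mul_sum_eq_zero hν hmu
  linarith

theorem pcpm_gap_le {Lc : Fin M → Fin N → ℝ}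
    (hLip : ∀ j i, ∀ y ∈ X i, ∀ z ∈ X i, |g j i y - g j i z| ≤ Lc j i * ‖y - z‖)
    {Amax Lmax : ℝ} (hAmax : ∀ i, ‖A i‖ ≤ Amax) (hLmax : ∀ j i, Lc j i ≤ Lmax) {ρ : ℝ}
    {x x' : ∀ i, EuclideanSpace ℝ (Fin (n i))} (hx : ∀ i, x i ∈ X i) (hx' : ∀ i, x' i ∈ X i)
    {lam lam' γ : EuclideanSpace ℝ (Fin m)}
    (hγ : γ = lam + ρ • ((∑ i, A i (x i)) - b)) (hlam : lam' = lam + ρ • ((∑ i, A i (x' i)) - b)) :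
    ‖γ - lam'‖ ^ 2 + ρ ^ 2 * ∑ j, (∑ i, g j i (x i) - ∑ i, g j i (x' i)) ^ 2
      ≤ ρ ^ 2 * (Amax ^ 2 * N + M * (Lmax ^ 2 * N)) * ∑ i, ‖x' i - x i‖ ^ 2 := by
  have hA := sq_le_card_mul_sum_sq_of_le_mul_sum (norm_nonneg _)
    (norm_sum_apply_sub_sum_apply_le hAmax x x')
  have hg : ∑ j, (∑ i, g j i (x i) - ∑ i, g j i (x' i)) ^ 2
      ≤ M * (Lmax ^ 2 * N * ∑ i, ‖x' i - x i‖ ^ 2) := by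
    simpa using Finset.sum_le_sum fun j (_ : j ∈ Finset.univ) =>
      (sq_abs _).symm.trans_le <| sq_le_card_mul_sum_sq_of_le_mul_sum (abs_nonneg _)
        (abs_sum_sub_sum_le_of_lipschitzOn (hLip j) (hLmax j) hx hx')
  have hγlam : γ - lam' = ρ • (∑ i, A i (x i) - ∑ i, A i (x' i)) := by
    rw [hγ, hlam, smul_sub, smul_sub, smul_sub]
    abel
  rw [hγlam, norm_smul, mul_pow, Real.norm_eq_abs, sq_abs]
  simp only [Fintype.card_fin] at hA
  nlinarith [mul_le_mul_of_nonneg_left hA (sq_nonneg ρ), mul_le_mul_of_nonneg_left hg (sq_nonneg ρ)]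

end PCPM

theorem stmt_7_general {N M m : ℕ} {n : Fin N → ℕ}
    (f : ∀ i, EuclideanSpace ℝ (Fin (n i)) → ℝ)
    (A : ∀ i, EuclideanSpace ℝ (Fin (n i)) →L[ℝ] EuclideanSpace ℝ (Fin m))
    (b : EuclideanSpace ℝ (Fin m))
    (g : Fin M → ∀ i, EuclideanSpace ℝ (Fin (n i)) → ℝ)
    (X : ∀ i, Set (EuclideanSpace ℝ (Fin (n i))))
    (hX : ∀ i, IsClosed (X i) ∧ Convex ℝ (X i))
    (hf : ∀ i, Continuous (f i) ∧ ConvexOn ℝ Set.univ (f i))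
    (hg : ∀ j i, Continuous (g j i) ∧ ConvexOn ℝ Set.univ (g j i))
    (Lc : Fin M → Fin N → ℝ)
    (hLip : ∀ j i, ∀ y ∈ X i, ∀ z ∈ X i, |g j i y - g j i z| ≤ Lc j i * ‖y - z‖)
    (Amax Lmax : ℝ) (hAmax : ∀ i, ‖A i‖ ≤ Amax) (hLmax : ∀ j i, Lc j i ≤ Lmax)
    (ε : ℝ) (hε0 : 0 < ε) (hε1 : ε < 1)
    (ρ : ℝ) (hρ0 : 0 < ρ)
    (hρ1 : ρ ≤ (1 - ε) / (Amax + M * Lmax))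
    (hρ2 : ρ ≤ (1 - ε) / (N * Amax))
    (hρ3 : ρ ≤ (1 - ε) / (N * Lmax))
    (x : ℕ → ∀ i, EuclideanSpace ℝ (Fin (n i)))
    (lam : ℕ → EuclideanSpace ℝ (Fin m)) (mu : ℕ → EuclideanSpace ℝ (Fin M))
    (γ : ℕ → EuclideanSpace ℝ (Fin m)) (ν : ℕ → EuclideanSpace ℝ (Fin M))
    (hx0 : ∀ i, x 0 i ∈ X i)
    (hγ : ∀ k, γ (k + 1) = lam k + ρ • ((∑ i, A i (x k i)) - b))
    (hν : ∀ k j, ν (k + 1) j = max 0 (mu k j + ρ * ∑ i, g j i (x k i)))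
    (hxmem : ∀ k i, x (k + 1) i ∈ X i)
    (hxmin : ∀ k i, ∀ y ∈ X i,
      f i (x (k + 1) i) + (inner ℝ (γ (k + 1)) (A i (x (k + 1) i)) : ℝ)
          + (∑ j, ν (k + 1) j * g j i (x (k + 1) i))
          + 1 / (2 * ρ) * ‖x (k + 1) i - x k i‖ ^ 2
        ≤ f i y + (inner ℝ (γ (k + 1)) (A i y) : ℝ) + (∑ j, ν (k + 1) j * g j i y)
          + 1 / (2 * ρ) * ‖y - x k i‖ ^ 2)
    (hlam : ∀ k, lam (k + 1) = lam k + ρ • ((∑ i, A i (x (k + 1) i)) - b))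
    (hmu : ∀ k j, mu (k + 1) j = max 0 (mu k j + ρ * ∑ i, g j i (x (k + 1) i)))
    (xs : ∀ i, EuclideanSpace ℝ (Fin (n i)))
    (ls : EuclideanSpace ℝ (Fin m)) (ms : EuclideanSpace ℝ (Fin M))
    (hsaddle : IsSaddlePoint f A b g X xs ls ms) :
    Filter.Tendsto (fun k => ∑ i, ‖x (k + 1) i - x k i‖ ^ 2) Filter.atTop (nhds 0) ∧
    Filter.Tendsto (fun k => ‖γ (k + 1) - lam (k + 1)‖) Filter.atTop (nhds 0) ∧
    Filter.Tendsto (fun k => ‖ν (k + 1) - mu (k + 1)‖) Filter.atTop (nhds 0) ∧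
    Filter.Tendsto (fun k => ‖γ (k + 1) - lam k‖) Filter.atTop (nhds 0) ∧
    Filter.Tendsto (fun k => ‖ν (k + 1) - mu k‖) Filter.atTop (nhds 0) := by
  obtain ⟨hXc, hfc, hgc⟩ : (∀ i, Convex ℝ (X i)) ∧ (∀ i, ConvexOn ℝ Set.univ (f i)) ∧
      ∀ j i, ConvexOn ℝ Set.univ (g j i) :=
    ⟨fun i => (hX i).2, fun i => (hf i).2, fun j i => (hg j i).2⟩
  have hxX : ∀ k i, x k i ∈ X i := by
    rintro (_ | k)
    exacts [hx0, hxmem k]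
  have hgap : ∀ k, ‖γ (k + 1) - lam (k + 1)‖ ^ 2
      + ρ ^ 2 * ∑ j, (∑ i, g j i (x k i) - ∑ i, g j i (x (k + 1) i)) ^ 2
      ≤ (1 - ε) ^ 2 * ∑ i, ‖x (k + 1) i - x k i‖ ^ 2 := fun k =>
    (pcpm_gap_le hLip hAmax hLmax (hxX k) (hxmem k) (hγ k) (hlam k)).trans
      (mul_le_mul_of_nonneg_right (step_size_sq_le hρ0 hε1 hρ1 hρ2 hρ3) (by positivity))
  obtain ⟨hdx, hdlam, hdmu⟩ := tendsto_zero_of_descent (by nlinarith : 0 < 1 - (1 - ε) ^ 2)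
    (V := fun k => (∑ i, ‖xs i - x k i‖ ^ 2) + ‖lam k - ls‖ ^ 2 + ‖mu k - ms‖ ^ 2)
    (a := fun k => ∑ i, ‖x (k + 1) i - x k i‖ ^ 2) (b := fun k => ‖γ (k + 1) - lam k‖ ^ 2)
    (c := fun k => ‖ν (k + 1) - mu k‖ ^ 2)
    (fun k => by positivity) (fun k => by positivity) (fun k => by positivity)
    (fun k => by positivity) fun k => by
      linarith [hgap k, pcpm_step_descent hXc hfc hgc hsaddle hρ0 (hν k) (hxmem k) (hxmin k)
        (hlam k) (hmu k)]
  refine ⟨hdx, tendsto_norm_zero_of_sq_le (C := (1 - ε) ^ 2) hdx fun k => ?_,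
    tendsto_norm_zero_of_sq_le (C := (1 - ε) ^ 2) hdx fun k => ?_,
    tendsto_norm_zero_of_sq_le hdlam fun k => (one_mul _).ge,
    tendsto_norm_zero_of_sq_le hdmu fun k => (one_mul _).ge⟩
  · exact (le_add_of_nonneg_right (by positivity)).trans (hgap k)
  · exact (norm_sq_max_zero_sub_le (hν k) (hmu k)).trans
      ((le_add_of_nonneg_left (sq_nonneg _)).trans (hgap k))

/-- vanishing successive differences of the N-block PCPM iterates. -/
theorem stmt_7 {N M m : ℕ} {n : Fin N → ℕ}
    (f : ∀ i, EuclideanSpace ℝ (Fin (n i)) → ℝ)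
    (A : ∀ i, EuclideanSpace ℝ (Fin (n i)) →L[ℝ] EuclideanSpace ℝ (Fin m))
    (b : EuclideanSpace ℝ (Fin m))
    (g : Fin M → ∀ i, EuclideanSpace ℝ (Fin (n i)) → ℝ)
    (X : ∀ i, Set (EuclideanSpace ℝ (Fin (n i))))
    (hX : ∀ i, IsClosed (X i) ∧ Convex ℝ (X i))
    (hf : ∀ i, Continuous (f i) ∧ ConvexOn ℝ Set.univ (f i))
    (hg : ∀ j i, Continuous (g j i) ∧ ConvexOn ℝ Set.univ (g j i))
    (Lc : Fin M → Fin N → ℝ)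
    (hLip : ∀ j i, ∀ y ∈ X i, ∀ z ∈ X i, |g j i y - g j i z| ≤ Lc j i * ‖y - z‖)
    (Amax Lmax : ℝ) (hAmax : ∀ i, ‖A i‖ ≤ Amax) (hLmax : ∀ j i, Lc j i ≤ Lmax)
    (ε : ℝ) (hε0 : 0 < ε) (hε1 : ε < 1)
    (ρ : ℝ) (hρ0 : 0 < ρ)
    (hρ1 : ρ ≤ (1 - ε) / (Amax + M * Lmax))
    (hρ2 : ρ ≤ (1 - ε) / (N * Amax))
    (hρ3 : ρ ≤ (1 - ε) / (N * Lmax))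
    (x : ℕ → ∀ i, EuclideanSpace ℝ (Fin (n i)))
    (lam : ℕ → EuclideanSpace ℝ (Fin m)) (mu : ℕ → EuclideanSpace ℝ (Fin M))
    (γ : ℕ → EuclideanSpace ℝ (Fin m)) (ν : ℕ → EuclideanSpace ℝ (Fin M))
    (hx0 : ∀ i, x 0 i ∈ X i) (hmu0 : ∀ j, 0 ≤ mu 0 j)
    (hγ : ∀ k, γ (k + 1) = lam k + ρ • ((∑ i, A i (x k i)) - b))
    (hν : ∀ k j, ν (k + 1) j = max 0 (mu k j + ρ * ∑ i, g j i (x k i)))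
    (hxmem : ∀ k i, x (k + 1) i ∈ X i)
    (hxmin : ∀ k i, ∀ y ∈ X i,
      f i (x (k + 1) i) + (inner ℝ (γ (k + 1)) (A i (x (k + 1) i)) : ℝ)
          + (∑ j, ν (k + 1) j * g j i (x (k + 1) i))
          + 1 / (2 * ρ) * ‖x (k + 1) i - x k i‖ ^ 2
        ≤ f i y + (inner ℝ (γ (k + 1)) (A i y) : ℝ) + (∑ j, ν (k + 1) j * g j i y)
          + 1 / (2 * ρ) * ‖y - x k i‖ ^ 2)
    (hlam : ∀ k, lam (k + 1) = lam k + ρ • ((∑ i, A i (x (k + 1) i)) - b))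
    (hmu : ∀ k j, mu (k + 1) j = max 0 (mu k j + ρ * ∑ i, g j i (x (k + 1) i)))
    (xs : ∀ i, EuclideanSpace ℝ (Fin (n i)))
    (ls : EuclideanSpace ℝ (Fin m)) (ms : EuclideanSpace ℝ (Fin M))
    (hsaddle : IsSaddlePoint f A b g X xs ls ms) :
    Filter.Tendsto (fun k => ∑ i, ‖x (k + 1) i - x k i‖ ^ 2) Filter.atTop (nhds 0) ∧
    Filter.Tendsto (fun k => ‖γ (k + 1) - lam (k + 1)‖) Filter.atTop (nhds 0) ∧
    Filter.Tendsto (fun k => ‖ν (k + 1) - mu (k + 1)‖) Filter.atTop (nhds 0) ∧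
    Filter.Tendsto (fun k => ‖γ (k + 1) - lam k‖) Filter.atTop (nhds 0) ∧
    Filter.Tendsto (fun k => ‖ν (k + 1) - mu k‖) Filter.atTop (nhds 0) :=
  stmt_7_general f A b g X hX hf hg Lc hLip Amax Lmax hAmax hLmax ε hε0 hε1 ρ hρ0 hρ1 hρ2 hρ3 x lam
    mu γ ν hx0 hγ hν hxmem hxmin hlam hmu xs ls ms hsaddle
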